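/- arXiv:1904.13185 — 2 statements merged into one kernel-verified Lean document; each statement's English description precedes it below -/
import Mathlib

section
/- Let N ∈ ℕ, Q_1,…,Q_N, E_1,…,E_{N−1} > 0, S the path encoding, M its past maximum, b_n the local minima locations of S, a_n the local maxima locations, and c_n = min{b_n + M(b_n) − S(b_n), a_{n+1}} (with a_{N+1} = ∞). Then for each 1 ≤ n ≤ N−1: M(b_{n+1}) − M(b_n) = a_{n+1} − c_n. -/
open MeasureTheory Set

noncomputable def aPt (Q E : ℕ → ℝ) (n : ℕ) : ℝ :=
  ∑ k ∈ Finset.Icc 1 (n - 1), (Q k + E k)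

noncomputable def bPt (Q E : ℕ → ℝ) (n : ℕ) : ℝ := aPt Q E n + Q n

def ballSet (N : ℕ) (Q E : ℕ → ℝ) : Set ℝ :=
  ⋃ n ∈ Finset.Icc 1 N, Set.Icc (aPt Q E n) (bPt Q E n)

noncomputable def pathEnc (N : ℕ) (Q E : ℕ → ℝ) (x : ℝ) : ℝ :=
  ∫ y in (0:ℝ)..x, (1 - 2 * Set.indicator (ballSet N Q E) (fun _ => (1:ℝ)) y)

noncomputable def pastMax (S : ℝ → ℝ) (x : ℝ) : ℝ := sSup (S '' Set.Iic x)

/-! On `[b_n, b_{n+1}]` the path rises with slope `1` up to `a_{n+1}` and then falls, so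
`M(b_{n+1}) = max (M(b_n)) (S(a_{n+1}))` with `S(a_{n+1}) = S(b_n) + (a_{n+1} - b_n)`.
Both sides of the identity are therefore `max (S(a_{n+1}) - M(b_n)) 0`. -/

lemma isGreatest_image_Icc_of_monotoneOn_of_antitoneOn {f : ℝ → ℝ} {x c y : ℝ}
    (hxc : x ≤ c) (hcy : c ≤ y) (hmono : MonotoneOn f (Icc x c))
    (hanti : AntitoneOn f (Icc c y)) : IsGreatest (f '' Icc x y) (f c) := by
  refine ⟨⟨c, ⟨hxc, hcy⟩, rfl⟩, ?_⟩
  rintro _ ⟨t, ⟨hxt, hty⟩, rfl⟩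
  rcases le_total t c with htc | hct
  · exact hmono ⟨hxt, htc⟩ ⟨hxc, le_rfl⟩ htc
  · exact hanti ⟨le_rfl, hcy⟩ ⟨hct, hty⟩ hct

lemma pastMax_eq_max_of_isGreatest {f : ℝ → ℝ} {x y m : ℝ} (hf : BddAbove (f '' Iic y))
    (hxy : x ≤ y) (hm : IsGreatest (f '' Icc x y) m) : pastMax f y = max (pastMax f x) m := by
  have hIic : BddAbove (f '' Iic x) := hf.mono (image_mono (Iic_subset_Iic.mpr hxy))
  have hIcc : BddAbove (f '' Icc x y) := hf.mono (image_mono Icc_subset_Iic_self)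
  rw [pastMax, ← Iic_union_Icc_eq_Iic hxy, image_union,
    csSup_union hIic ⟨f x, x, self_mem_Iic, rfl⟩ hIcc hm.nonempty, hm.csSup_eq]
  rfl

section SlopePath

noncomputable def slopePath (B : Set ℝ) (x : ℝ) : ℝ :=
  ∫ y in (0:ℝ)..x, (1 - 2 * B.indicator (fun _ => (1:ℝ)) y)

variable {B : Set ℝ}

lemma intervalIntegrable_slope (hB : MeasurableSet B) (x y : ℝ) :
    IntervalIntegrable (fun t => 1 - 2 * B.indicator (fun _ => (1:ℝ)) t) volume x y := by
  have hind : IntervalIntegrable (B.indicator fun _ => (1:ℝ)) volume x y := by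
    rw [intervalIntegrable_iff]
    exact (integrableOn_const measure_Ioc_lt_top.ne).indicator hB
  exact intervalIntegrable_const.sub (hind.const_mul 2)

lemma slopePath_sub_slopePath (hB : MeasurableSet B) (x y : ℝ) :
    slopePath B y - slopePath B x = ∫ t in x..y, (1 - 2 * B.indicator (fun _ => (1:ℝ)) t) :=
  intervalIntegral.integral_interval_sub_left (intervalIntegrable_slope hB 0 y)
    (intervalIntegrable_slope hB 0 x)

lemma slopePath_eq_add_of_disjoint (hB : MeasurableSet B) {x y : ℝ} (hxy : x ≤ y)
    (hgap : Disjoint (Ioo x y) B) : slopePath B y = slopePath B x + (y - x) := by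
  have hone : ∫ t in x..y, (1 - 2 * B.indicator (fun _ => (1:ℝ)) t) = ∫ _ in x..y, (1:ℝ) := by
    refine intervalIntegral.integral_congr_ae ?_
    filter_upwards [Measure.ae_ne volume y] with t hty ht
    rw [uIoc_of_le hxy] at ht
    have htB : t ∉ B := hgap.notMem_of_mem_left ⟨ht.1, lt_of_le_of_ne ht.2 hty⟩
    simp [indicator_of_notMem htB]
  have := slopePath_sub_slopePath hB x y
  rw [hone, intervalIntegral.integral_const, smul_eq_mul, mul_one] at this
  linarith

lemma slopePath_eq_sub_of_subset (hB : MeasurableSet B) {x y : ℝ} (hxy : x ≤ y)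
    (hsub : Icc x y ⊆ B) : slopePath B y = slopePath B x - (y - x) := by
  have hneg : ∫ t in x..y, (1 - 2 * B.indicator (fun _ => (1:ℝ)) t) = ∫ _ in x..y, (-1:ℝ) := by
    refine intervalIntegral.integral_congr fun t ht => ?_
    simp only [indicator_of_mem (hsub (uIcc_of_le hxy ▸ ht))]
    norm_num
  have := slopePath_sub_slopePath hB x y
  rw [hneg, intervalIntegral.integral_const, smul_eq_mul] at this
  linarith

lemma slopePath_le_max (hB : MeasurableSet B) (hB0 : Disjoint (Iio 0) B) (y : ℝ) :
    slopePath B y ≤ max y 0 := by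
  rcases le_total y 0 with hy | hy
  · have h := slopePath_eq_add_of_disjoint hB hy (hB0.mono_left fun t ht => ht.2)
    have h0 : slopePath B 0 = 0 := intervalIntegral.integral_same
    linarith [le_max_left y 0]
  · have h : slopePath B y ≤ ∫ _ in (0:ℝ)..y, (1:ℝ) :=
      intervalIntegral.integral_mono_on hy (intervalIntegrable_slope hB 0 y)
        intervalIntegrable_const fun t _ => by
          linarith [indicator_nonneg (s := B) (fun _ _ => zero_le_one (α := ℝ)) t]
    simp only [intervalIntegral.integral_const, smul_eq_mul, mul_one, sub_zero] at h
    exact h.trans (le_max_left y 0)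

lemma bddAbove_slopePath_image_Iic (hB : MeasurableSet B) (hB0 : Disjoint (Iio 0) B) (x : ℝ) :
    BddAbove (slopePath B '' Iic x) := by
  refine ⟨max x 0, ?_⟩
  rintro _ ⟨y, hy, rfl⟩
  exact (slopePath_le_max hB hB0 y).trans (max_le_max hy le_rfl)

end SlopePath

section Balls

variable {N : ℕ} {Q E : ℕ → ℝ}

lemma pathEnc_eq_slopePath : pathEnc N Q E = slopePath (ballSet N Q E) := rfl

lemma measurableSet_ballSet : MeasurableSet (ballSet N Q E) :=
  MeasurableSet.biUnion (Finset.Icc 1 N).countable_toSet fun _ _ => measurableSet_Icc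

lemma Icc_subset_ballSet {n : ℕ} (hn : 1 ≤ n) (hnN : n ≤ N) :
    Icc (aPt Q E n) (bPt Q E n) ⊆ ballSet N Q E :=
  subset_biUnion_of_mem (u := fun m => Icc (aPt Q E m) (bPt Q E m)) (by simp [hn, hnN])

lemma aPt_succ {n : ℕ} (hn : 1 ≤ n) : aPt Q E (n + 1) = bPt Q E n + E n := by
  obtain ⟨m, rfl⟩ : ∃ m, n = m + 1 := ⟨n - 1, by omega⟩
  simp only [bPt, aPt, Nat.add_sub_cancel, Finset.sum_Icc_succ_top (by omega : 1 ≤ m + 1)]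
  ring

lemma aPt_mono (hQ : ∀ n, 1 ≤ n → n ≤ N → 0 < Q n) (hE : ∀ n, 1 ≤ n → n ≤ N - 1 → 0 < E n)
    {m n : ℕ} (hmn : m ≤ n) (hnN : n ≤ N) : aPt Q E m ≤ aPt Q E n := by
  refine Finset.sum_le_sum_of_subset_of_nonneg (Finset.Icc_subset_Icc_right (by omega))
    fun k hk _ => ?_
  rw [Finset.mem_Icc] at hk
  linarith [hQ k hk.1 (by omega), hE k hk.1 (by omega)]

lemma bPt_mono (hQ : ∀ n, 1 ≤ n → n ≤ N → 0 < Q n) (hE : ∀ n, 1 ≤ n → n ≤ N - 1 → 0 < E n)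
    {m n : ℕ} (hm : 1 ≤ m) (hmn : m ≤ n) (hnN : n ≤ N) : bPt Q E m ≤ bPt Q E n := by
  rcases hmn.eq_or_lt with rfl | hlt
  · exact le_rfl
  · have hgap : aPt Q E (m + 1) ≤ aPt Q E n := aPt_mono hQ hE hlt hnN
    rw [aPt_succ hm] at hgap
    linarith [hE m hm (by omega), hQ n (by omega) hnN, show bPt Q E n = aPt Q E n + Q n from rfl]

lemma disjoint_Iio_zero_ballSet (hQ : ∀ n, 1 ≤ n → n ≤ N → 0 < Q n)
    (hE : ∀ n, 1 ≤ n → n ≤ N - 1 → 0 < E n) : Disjoint (Iio 0) (ballSet N Q E) := by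
  refine disjoint_left.mpr fun t ht htB => ?_
  simp only [ballSet, mem_iUnion, Finset.mem_Icc] at htB
  obtain ⟨m, ⟨-, hmN⟩, htm⟩ := htB
  have ha0 : 0 ≤ aPt Q E m := by simpa [aPt] using aPt_mono hQ hE m.zero_le hmN
  linarith [mem_Iio.mp ht, htm.1]

lemma disjoint_Ioo_ballSet (hQ : ∀ n, 1 ≤ n → n ≤ N → 0 < Q n)
    (hE : ∀ n, 1 ≤ n → n ≤ N - 1 → 0 < E n) {n : ℕ} (hnN : n + 1 ≤ N) :
    Disjoint (Ioo (bPt Q E n) (aPt Q E (n + 1))) (ballSet N Q E) := by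
  refine disjoint_left.mpr fun t ht htB => ?_
  simp only [ballSet, mem_iUnion, Finset.mem_Icc] at htB
  obtain ⟨m, ⟨hm, hmN⟩, htm⟩ := htB
  rcases le_or_gt m n with hmn | hnm
  · linarith [bPt_mono hQ hE hm hmn (by omega), htm.2, ht.1]
  · linarith [aPt_mono hQ hE (show n + 1 ≤ m by omega) hmN, htm.1, ht.2]

end Balls

lemma max_sub_eq_sub_min (M s a b : ℝ) : max M (s + (a - b)) - M = a - min (b + M - s) a := by
  simp only [max_def, min_def]
  split_ifs <;> linarith

theorem max_increment_eq_general (N : ℕ) (Q E : ℕ → ℝ)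
    (hQ : ∀ n, 1 ≤ n → n ≤ N → 0 < Q n)
    (hE : ∀ n, 1 ≤ n → n ≤ N - 1 → 0 < E n) :
    ∀ n, 1 ≤ n → n ≤ N - 1 →
      pastMax (pathEnc N Q E) (bPt Q E (n + 1)) - pastMax (pathEnc N Q E) (bPt Q E n) =
        aPt Q E (n + 1) -
          min (bPt Q E n + pastMax (pathEnc N Q E) (bPt Q E n) - pathEnc N Q E (bPt Q E n))
            (aPt Q E (n + 1)) := by
  intro n hn hnN
  have hB : MeasurableSet (ballSet N Q E) := measurableSet_ballSet
  rw [pathEnc_eq_slopePath]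
  set S := slopePath (ballSet N Q E)
  set b := bPt Q E n
  set a := aPt Q E (n + 1)
  set b' := bPt Q E (n + 1)
  have hba : b ≤ a := by linarith [aPt_succ (Q := Q) (E := E) hn, hE n hn hnN]
  have hab' : a ≤ b' := le_add_of_nonneg_right (hQ (n + 1) (by omega) (by omega)).le
  have hrise : ∀ t ∈ Icc b a, S t = S b + (t - b) := fun t ht =>
    slopePath_eq_add_of_disjoint hB ht.1
      ((disjoint_Ioo_ballSet hQ hE (by omega)).mono_left (Ioo_subset_Ioo_right ht.2))
  have hfall : ∀ t ∈ Icc a b', S t = S a - (t - a) := fun t ht =>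
    slopePath_eq_sub_of_subset hB ht.1
      ((Icc_subset_Icc_right ht.2).trans (Icc_subset_ballSet (by omega) (by omega)))
  have hmax : pastMax S b' = max (pastMax S b) (S a) :=
    pastMax_eq_max_of_isGreatest
      (bddAbove_slopePath_image_Iic hB (disjoint_Iio_zero_ballSet hQ hE) b') (hba.trans hab')
      (isGreatest_image_Icc_of_monotoneOn_of_antitoneOn hba hab'
        (fun s hs t ht hst => by linarith [hrise s hs, hrise t ht])
        (fun s hs t ht hst => by linarith [hfall s hs, hfall t ht]))
  rw [hmax, hrise a ⟨hba, le_rfl⟩]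
  exact max_sub_eq_sub_min _ _ _ _

theorem max_increment_eq (N : ℕ) (hN : 1 ≤ N) (Q E : ℕ → ℝ)
    (hQ : ∀ n, 1 ≤ n → n ≤ N → 0 < Q n)
    (hE : ∀ n, 1 ≤ n → n ≤ N - 1 → 0 < E n) :
    ∀ n, 1 ≤ n → n ≤ N - 1 →
      pastMax (pathEnc N Q E) (bPt Q E (n + 1)) - pastMax (pathEnc N Q E) (bPt Q E n) =
        aPt Q E (n + 1) -
          min (bPt Q E n + pastMax (pathEnc N Q E) (bPt Q E n) - pathEnc N Q E (bPt Q E n))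
            (aPt Q E (n + 1)) :=
  max_increment_eq_general N Q E hQ hE
end

section
/- Let S : ℝ → ℝ be continuous with local maxima at a_1 < … < a_N and local minima at b_1 < … < b_N, strictly monotone between extrema, S(0) = 0, M(x) = sup_{y≤x} S(y) finite, and define Q_n(S), E_n(S) as amplitudes and Q_n(TS) = min{M(a_n) − S(b_n), E_n(S)}. Then for all 1 ≤ n ≤ N: M(a_n) − S(b_n) = Σ_{k=1}^n Q_k(S) − Σ_{k=1}^{n−1} Q_k(TS); consequently Q_n(TS) = min{ Σ_{k=1}^n Q_k(S) − Σ_{k=1}^{n−1} Q_k(TS), E_n(S) }, i.e., the Pitman transform realizes the ultra-discrete Toda lattice equation for general continuous path encodings. -/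
/-!
With `M = pastMax S`: between consecutive peaks `a n < a (n + 1)` the path descends to `b n` and then
climbs, so `M (a (n + 1)) = max (S (a (n + 1))) (M (a n))`, while `M (a 1) = S (a 1)`. Writing
`Q_n(TS) = min (M (a n), S (a (n + 1))) - S (b n)` and using `max x y + min x y = x + y`,
the increment of `M (a n) - S (b n)` is `Q_{n+1}(S) - Q_n(TS)`, which telescopes.
-/

open Finset Set

section PastMax

variable {S : ℝ → ℝ} {x y : ℝ}

lemma le_pastMax (hB : BddAbove (S '' Iic x)) (h : y ≤ x) : S y ≤ pastMax S x :=
  le_csSup hB ⟨y, h, rfl⟩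

lemma pastMax_le {c : ℝ} (h : ∀ y ≤ x, S y ≤ c) : pastMax S x ≤ c :=
  csSup_le ⟨S x, x, self_mem_Iic, rfl⟩ (by rintro _ ⟨y, hy, rfl⟩; exact h y hy)

lemma pastMax_mono (hB : BddAbove (S '' Iic y)) (h : x ≤ y) : pastMax S x ≤ pastMax S y :=
  csSup_le_csSup hB ⟨S x, x, self_mem_Iic, rfl⟩ (image_mono (Iic_subset_Iic.mpr h))

lemma pastMax_eq_of_monotoneOn (h : MonotoneOn S (Iic x)) : pastMax S x = S x :=
  IsGreatest.csSup_eq ⟨⟨x, self_mem_Iic, rfl⟩,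
    by rintro _ ⟨y, hy, rfl⟩; exact h hy self_mem_Iic hy⟩

lemma pastMax_eq_max_of_antitoneOn_of_monotoneOn {p q r : ℝ} (hpq : p ≤ q) (hqr : q ≤ r)
    (hB : BddAbove (S '' Iic r)) (hanti : AntitoneOn S (Icc p q))
    (hmono : MonotoneOn S (Icc q r)) :
    pastMax S r = max (S r) (pastMax S p) := by
  have hBp : BddAbove (S '' Iic p) := hB.mono (image_mono (Iic_subset_Iic.mpr (hpq.trans hqr)))
  refine le_antisymm (pastMax_le fun y hy => ?_)
    (max_le (le_pastMax hB le_rfl) (pastMax_mono hB (hpq.trans hqr)))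
  rcases le_or_gt y p with hyp | hpy
  · exact (le_pastMax hBp hyp).trans (le_max_right _ _)
  rcases le_or_gt y q with hyq | hqy
  · have : S y ≤ S p := hanti ⟨le_rfl, hpq⟩ ⟨hpy.le, hyq⟩ hpy.le
    exact (this.trans (le_pastMax hBp le_rfl)).trans (le_max_right _ _)
  · exact (hmono ⟨hqy.le, hy⟩ ⟨hqr, le_rfl⟩ hy).trans (le_max_left _ _)

end PastMax

lemma sub_eq_sum_sub_sum_of_max_recursion (M A B Q : ℕ → ℝ) (N : ℕ) (hM₁ : M 1 = A 1)
    (hM : ∀ n, 1 ≤ n → n < N → M (n + 1) = max (A (n + 1)) (M n))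
    (hQ : ∀ n, 1 ≤ n → n < N → Q n = min (M n - B n) (A (n + 1) - B n)) :
    ∀ n, 1 ≤ n → n ≤ N →
      M n - B n = ∑ k ∈ Icc 1 n, (A k - B k) - ∑ k ∈ Icc 1 (n - 1), Q k := by
  intro n hn
  induction n, hn using Nat.le_induction with
  | base => simp [hM₁]
  | succ m hm ih =>
    intro hmN
    obtain ⟨j, rfl⟩ : ∃ j, m = j + 1 := ⟨m - 1, by omega⟩
    have hsumA := sum_Icc_succ_top (show 1 ≤ j + 1 + 1 by omega) (fun k => A k - B k)
    have hsumQ := sum_Icc_succ_top (show 1 ≤ j + 1 by omega) Q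
    have hQm : Q (j + 1) = min (A (j + 1 + 1)) (M (j + 1)) - B (j + 1) := by
      rw [hQ _ hm (by omega), min_comm, min_sub_sub_right]
    rw [Nat.add_sub_cancel] at ih ⊢
    rw [hM _ hm (by omega)]
    linarith [ih (by omega), max_add_min (A (j + 1 + 1)) (M (j + 1))]

theorem pitman_realizes_toda_general (S : ℝ → ℝ)
    (hB : ∀ x : ℝ, BddAbove (S '' Set.Iic x))
    (N : ℕ) (a b : ℕ → ℝ)
    (horder : ∀ n, 1 ≤ n → n ≤ N → a n < b n ∧ (n ≤ N - 1 → b n < a (n + 1)))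
    (hinc₀ : StrictMonoOn S (Set.Iic (a 1)))
    (hdec : ∀ n, 1 ≤ n → n ≤ N → StrictAntiOn S (Set.Icc (a n) (b n)))
    (hinc : ∀ n, 1 ≤ n → n ≤ N - 1 → StrictMonoOn S (Set.Icc (b n) (a (n + 1))))
    (QT : ℕ → ℝ)
    (hQT : ∀ k, 1 ≤ k → k ≤ N - 1 →
      QT k = min (pastMax S (a k) - S (b k)) (S (a (k + 1)) - S (b k)))
    (hQTN : QT N = pastMax S (a N) - S (b N)) :
    ∀ n, 1 ≤ n → n ≤ N →
      (pastMax S (a n) - S (b n) =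
        (∑ k ∈ Finset.Icc 1 n, (S (a k) - S (b k))) - ∑ k ∈ Finset.Icc 1 (n - 1), QT k) ∧
      (n ≤ N - 1 → QT n =
        min ((∑ k ∈ Finset.Icc 1 n, (S (a k) - S (b k))) - ∑ k ∈ Finset.Icc 1 (n - 1), QT k)
          (S (a (n + 1)) - S (b n))) ∧
      (n = N → QT N =
        (∑ k ∈ Finset.Icc 1 N, (S (a k) - S (b k))) - ∑ k ∈ Finset.Icc 1 (N - 1), QT k) := by
  have hstep : ∀ n, 1 ≤ n → n < N →
      pastMax S (a (n + 1)) = max (S (a (n + 1))) (pastMax S (a n)) := fun n h1 h2 =>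
    pastMax_eq_max_of_antitoneOn_of_monotoneOn (horder n h1 h2.le).1.le
      ((horder n h1 h2.le).2 (by omega)).le (hB _) (hdec n h1 h2.le).antitoneOn
      (hinc n h1 (by omega)).monotoneOn
  have key := sub_eq_sum_sub_sum_of_max_recursion (fun n => pastMax S (a n)) (fun n => S (a n))
    (fun n => S (b n)) QT N (pastMax_eq_of_monotoneOn hinc₀.monotoneOn) hstep
    (fun n h1 h2 => hQT n h1 (by omega))
  intro n h1 h2
  refine ⟨key n h1 h2, fun hn => by rw [hQT n h1 hn, key n h1 h2], ?_⟩
  rintro rfl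
  rw [hQTN, key _ h1 h2]

theorem pitman_realizes_toda (S : ℝ → ℝ) (hS : Continuous S) (h0 : S 0 = 0)
    (hB : ∀ x : ℝ, BddAbove (S '' Set.Iic x))
    (N : ℕ) (hN : 1 ≤ N) (a b : ℕ → ℝ)
    (horder : ∀ n, 1 ≤ n → n ≤ N → a n < b n ∧ (n ≤ N - 1 → b n < a (n + 1)))
    (hinc₀ : StrictMonoOn S (Set.Iic (a 1)))
    (hdec : ∀ n, 1 ≤ n → n ≤ N → StrictAntiOn S (Set.Icc (a n) (b n)))
    (hinc : ∀ n, 1 ≤ n → n ≤ N - 1 → StrictMonoOn S (Set.Icc (b n) (a (n + 1))))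
    (hincN : StrictMonoOn S (Set.Ici (b N)))
    (QT : ℕ → ℝ)
    (hQT : ∀ k, 1 ≤ k → k ≤ N - 1 →
      QT k = min (pastMax S (a k) - S (b k)) (S (a (k + 1)) - S (b k)))
    (hQTN : QT N = pastMax S (a N) - S (b N)) :
    ∀ n, 1 ≤ n → n ≤ N →
      (pastMax S (a n) - S (b n) =
        (∑ k ∈ Finset.Icc 1 n, (S (a k) - S (b k))) - ∑ k ∈ Finset.Icc 1 (n - 1), QT k) ∧
      (n ≤ N - 1 → QT n =
        min ((∑ k ∈ Finset.Icc 1 n, (S (a k) - S (b k))) - ∑ k ∈ Finset.Icc 1 (n - 1), QT k)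
          (S (a (n + 1)) - S (b n))) ∧
      (n = N → QT N =
        (∑ k ∈ Finset.Icc 1 N, (S (a k) - S (b k))) - ∑ k ∈ Finset.Icc 1 (N - 1), QT k) :=
  pitman_realizes_toda_general S hB N a b horder hinc₀ hdec hinc QT hQT hQTN
end
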